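/- arXiv:2101.03389 — 2 statements merged into one kernel-verified Lean document; each statement's English description precedes it below -/
import Mathlib

section
/- Consider the discrete-time linear time-varying system x_{k+1} = A_k x_k + B_k u_k + W_k w_k, z_k = C_k x_k + V_k v_k and the dynamic estimator x̂_{k+1} = A_k x̂_k + B_k u_k − u_{e,k}, s_{k+1} = A_k s_k + u_{e,k} + L_k z̃_k with z̃_k = z_k − C_k(x̂_k + s_k) and u_{e,k} = ν_k + Σ_{i=0}^{k} M_{(k,i)} z̃_i (all measurements available at every step). Then for every k ∈ ℕ the estimation error x̃_k := x_k − x̂_k is the explicit affine function of (w, v, x̃_0, s_0, ν): x̃_k = A^k_0 x̃_0 + Σ_{i=0}^{k−1} A^k_{i+1} ( W_i w_i + ν_i + Σ_{j=0}^{i} M_{(i,j)} ( C_j ( Φ^j_0 (x̃_0 − s_0) + Σ_{l=0}^{j−1} Φ^j_{l+1}(W_l w_l − L_l V_l v_l) ) + V_j v_j ) ), where A^k_i := A_{k−1}⋯A_i, Φ_k := A_k − L_k C_k, and Φ^j_l := Φ_{j−1}⋯Φ_l (empty products equal to I_n). -/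
open Matrix

/-- Transition matrix `A^k_i := A_{k−1} A_{k−2} ⋯ A_i` (empty product equals identity). -/
def transMat {n : ℕ} (A : ℕ → Matrix (Fin n) (Fin n) ℝ) (i k : ℕ) :
    Matrix (Fin n) (Fin n) ℝ :=
  ((List.range (k - i)).map fun l => A (k - 1 - l)).prod


lemma transMat_self {n : ℕ} (A : ℕ → Matrix (Fin n) (Fin n) ℝ) (i : ℕ) :
    transMat A i i = 1 := by
  simp [transMat]

lemma transMat_succ {n : ℕ} (A : ℕ → Matrix (Fin n) (Fin n) ℝ) {i k : ℕ} (h : i ≤ k) :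
    transMat A i (k + 1) = A k * transMat A i k := by
  unfold transMat
  have h1 : k + 1 - i = (k - i) + 1 := by omega
  have h2 : ((fun l => A (k - l)) ∘ (· + 1)) = fun l => A (k - 1 - l) := by
    funext l
    simp only [Function.comp]
    rw [show k - (l + 1) = k - 1 - l by omega]
  rw [h1]
  simp only [Nat.add_sub_cancel]
  rw [List.range_succ_eq_map, List.map_cons, List.map_map, List.prod_cons, h2, Nat.sub_zero]

lemma mulVec_sum' {n : ℕ} (A : Matrix (Fin n) (Fin n) ℝ) (t : Finset ℕ) (g : ℕ → Fin n → ℝ) :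
    A *ᵥ (∑ i ∈ t, g i) = ∑ i ∈ t, A *ᵥ g i := by
  exact map_sum (Matrix.mulVecLin A) g t

lemma voc {n : ℕ} (A : ℕ → Matrix (Fin n) (Fin n) ℝ) (f y : ℕ → Fin n → ℝ)
    (h : ∀ k, y (k + 1) = A k *ᵥ y k + f k) :
    ∀ k, y k = transMat A 0 k *ᵥ y 0 +
      ∑ i ∈ Finset.range k, transMat A (i + 1) k *ᵥ f i := by
  intro k
  induction k with
  | zero => simp [transMat_self]
  | succ k ih =>
    have hsum : ∀ i ∈ Finset.range k,
        transMat A (i + 1) (k + 1) *ᵥ f i = A k *ᵥ (transMat A (i + 1) k *ᵥ f i) := by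
      intro i hi
      rw [Matrix.mulVec_mulVec, transMat_succ A (Finset.mem_range.mp hi)]
    rw [h k, ih, Finset.sum_range_succ, transMat_succ A (Nat.zero_le k),
      Finset.sum_congr rfl hsum, transMat_self]
    simp only [Matrix.mulVec_add, Matrix.one_mulVec, ← Matrix.mulVec_mulVec]
    rw [mulVec_sum']
    abel

/-- For the LTV system `x_{k+1} = A_k x_k + B_k u_k + W_k w_k`,
`z_k = C_k x_k + V_k v_k` and the dynamic estimator
`x̂_{k+1} = A_k x̂_k + B_k u_k − u_{e,k}`, `s_{k+1} = A_k s_k + u_{e,k} + L_k z̃_k`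
with `z̃_k = z_k − C_k(x̂_k + s_k)` and `u_{e,k} = ν_k + Σ_{i=0}^{k} M_{(k,i)} z̃_i`,
the estimation error `x̃_k := x_k − x̂_k` is the explicit affine function of
`(w, v, x̃_0, s_0, ν)`:
`x̃_k = A^k_0 x̃_0 + Σ_{i<k} A^k_{i+1} ( W_i w_i + ν_i + Σ_{j≤i} M_{(i,j)}
  ( C_j ( Φ^j_0 (x̃_0 − s_0) + Σ_{l<j} Φ^j_{l+1}(W_l w_l − L_l V_l v_l) ) + V_j v_j ) )`,
where `Φ_k := A_k − L_k C_k` and empty matrix products equal the identity. -/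
theorem error_affine_closed_form {n m p : ℕ}
    (A W : ℕ → Matrix (Fin n) (Fin n) ℝ)
    (B : ℕ → Matrix (Fin n) (Fin m) ℝ)
    (C : ℕ → Matrix (Fin p) (Fin n) ℝ)
    (V : ℕ → Matrix (Fin p) (Fin p) ℝ)
    (L : ℕ → Matrix (Fin n) (Fin p) ℝ)
    (M : ℕ → ℕ → Matrix (Fin n) (Fin p) ℝ)
    (x xhat s w ue ν : ℕ → Fin n → ℝ)
    (u : ℕ → Fin m → ℝ)
    (z v ztilde : ℕ → Fin p → ℝ)
    (hsys : ∀ k, x (k + 1) = A k *ᵥ x k + B k *ᵥ u k + W k *ᵥ w k)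
    (hout : ∀ k, z k = C k *ᵥ x k + V k *ᵥ v k)
    (hest : ∀ k, xhat (k + 1) = A k *ᵥ xhat k + B k *ᵥ u k - ue k)
    (haux : ∀ k, s (k + 1) = A k *ᵥ s k + ue k + L k *ᵥ ztilde k)
    (hinn : ∀ k, ztilde k = z k - C k *ᵥ (xhat k + s k))
    (hue : ∀ k, ue k = ν k + ∑ i ∈ Finset.range (k + 1), M k i *ᵥ ztilde i) :
    ∀ k, x k - xhat k =
      transMat A 0 k *ᵥ (x 0 - xhat 0) +
      ∑ i ∈ Finset.range k, transMat A (i + 1) k *ᵥ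
        (W i *ᵥ w i + ν i +
          ∑ j ∈ Finset.range (i + 1), M i j *ᵥ
            (C j *ᵥ
              (transMat (fun k' => A k' - L k' * C k') 0 j *ᵥ
                  ((x 0 - xhat 0) - s 0) +
                ∑ l ∈ Finset.range j,
                  transMat (fun k' => A k' - L k' * C k') (l + 1) j *ᵥ
                    (W l *ᵥ w l - L l *ᵥ (V l *ᵥ v l))) +
              V j *ᵥ v j)) := by
  have hz : ∀ k, ztilde k = C k *ᵥ (x k - xhat k - s k) + V k *ᵥ v k := by
    intro k
    rw [hinn k, hout k]
    simp only [Matrix.mulVec_sub, Matrix.mulVec_add]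
    abel
  have hd : ∀ k, x (k + 1) - xhat (k + 1) - s (k + 1) =
      (A k - L k * C k) *ᵥ (x k - xhat k - s k) +
        (W k *ᵥ w k - L k *ᵥ (V k *ᵥ v k)) := by
    intro k
    rw [hsys k, hest k, haux k, hz k]
    simp only [Matrix.sub_mulVec, Matrix.mulVec_add, Matrix.mulVec_sub,
      Matrix.mulVec_mulVec]
    abel
  have hdform := voc (fun k' => A k' - L k' * C k')
    (fun k' => W k' *ᵥ w k' - L k' *ᵥ (V k' *ᵥ v k'))
    (fun k' => x k' - xhat k' - s k') hd
  have heform := voc A (fun k' => W k' *ᵥ w k' + ue k') (fun k' => x k' - xhat k')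
    (by
      intro k
      show x (k + 1) - xhat (k + 1) = A k *ᵥ (x k - xhat k) + (W k *ᵥ w k + ue k)
      rw [hsys k, hest k]
      simp only [Matrix.mulVec_add, Matrix.mulVec_sub]
      abel)
  beta_reduce at heform hdform
  intro k
  rw [heform k]
  refine congrArg _ (Finset.sum_congr rfl fun i _ => ?_)
  refine congrArg _ ?_
  have hsum2 : ∑ j ∈ Finset.range (i + 1), M i j *ᵥ ztilde j =
      ∑ j ∈ Finset.range (i + 1), M i j *ᵥ
        (C j *ᵥ
          (transMat (fun k' => A k' - L k' * C k') 0 j *ᵥ (x 0 - xhat 0 - s 0) +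
            ∑ l ∈ Finset.range j,
              transMat (fun k' => A k' - L k' * C k') (l + 1) j *ᵥ
                (W l *ᵥ w l - L l *ᵥ (V l *ᵥ v l))) +
          V j *ᵥ v j) :=
    Finset.sum_congr rfl fun j _ => by rw [hz j, hdform j]
  rw [hue i, hsum2]
  exact (add_assoc _ _ _).symm
end

section
/- Let T ≥ 1 and let τ_α, τ_β : ℕ → ℕ be two delay words of length T. The corresponding event sequences coincide, i.e., j_k(τ_α) = j_k(τ_β) for all k ∈ {0, …, T−1}, if and only if for every i < T either τ_α(i) = τ_β(i), or both τ_α(i) ≥ T − i and τ_β(i) ≥ T − i. In particular, a delay beyond the horizon is indistinguishable (within the horizon) from missing data, and the map from words to event sequences need not be injective. -/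
/-- Event index `j_k(τ) := Σ_{ℓ=0}^{k} 2^ℓ · 𝟙[τ(k−ℓ) ≤ ℓ]` for a delay word
`τ : ℕ → ℕ` and time `k`. -/
def eventIndex (τ : ℕ → ℕ) (k : ℕ) : ℕ :=
  ∑ l ∈ Finset.range (k + 1), 2 ^ l * (if τ (k - l) ≤ l then 1 else 0)

lemma binSum_lt (P : ℕ → Prop) [DecidablePred P] (n : ℕ) :
    (∑ l ∈ Finset.range n, 2 ^ l * (if P l then 1 else 0)) < 2 ^ n := by
  induction n with
  | zero => simp
  | succ n ih =>
    rw [Finset.sum_range_succ]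
    have h2 : (2:ℕ) ^ (n+1) = 2 ^ n + 2 ^ n := by ring
    split_ifs <;> omega

lemma binSum_eq_iff (P Q : ℕ → Prop) [DecidablePred P] [DecidablePred Q] (n : ℕ) :
    (∑ l ∈ Finset.range n, 2 ^ l * (if P l then 1 else 0)) =
      (∑ l ∈ Finset.range n, 2 ^ l * (if Q l then 1 else 0)) ↔
    ∀ l < n, (P l ↔ Q l) := by
  induction n with
  | zero => simp
  | succ n ih =>
    rw [Finset.sum_range_succ, Finset.sum_range_succ]
    have hP := binSum_lt P n
    have hQ := binSum_lt Q n
    constructor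
    · intro h
      have hlast : (if P n then 1 else 0) = (if Q n then 1 else 0) ∧
          (∑ l ∈ Finset.range n, 2 ^ l * (if P l then 1 else 0)) =
          (∑ l ∈ Finset.range n, 2 ^ l * (if Q l then 1 else 0)) := by
        split_ifs at h ⊢ <;> omega
      intro l hl
      rcases Nat.lt_succ_iff_lt_or_eq.mp hl with hl | rfl
      · exact (ih.mp hlast.2) l hl
      · have := hlast.1; split_ifs at this with h1 h2 <;> tauto
    · intro h
      have h1 : (∑ l ∈ Finset.range n, 2 ^ l * (if P l then 1 else 0)) =
          (∑ l ∈ Finset.range n, 2 ^ l * (if Q l then 1 else 0)) :=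
        ih.mpr fun l hl => h l (Nat.lt_succ_of_lt hl)
      have h2 : (if P n then 1 else 0) = (if Q n then 1 else 0) := by
        have := h n (Nat.lt_succ_self n); split_ifs <;> tauto
      rw [h1, h2]

lemma eventIndex_eq_iff (τα τβ : ℕ → ℕ) (k : ℕ) :
    eventIndex τα k = eventIndex τβ k ↔
    ∀ l < k + 1, (τα (k - l) ≤ l ↔ τβ (k - l) ≤ l) := by
  exact binSum_eq_iff (fun l => τα (k - l) ≤ l) (fun l => τβ (k - l) ≤ l) (k + 1)

/-- Let `T ≥ 1` and let `τ_α, τ_β : ℕ → ℕ` be two delay words of length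
`T`. The corresponding event sequences coincide, i.e. `j_k(τ_α) = j_k(τ_β)` for all
`k ∈ {0, …, T−1}`, iff for every `i < T` either `τ_α(i) = τ_β(i)`, or both
`τ_α(i) ≥ T − i` and `τ_β(i) ≥ T − i` (a delay beyond the horizon is
indistinguishable within the horizon from missing data). -/
theorem eventSequence_eq_iff (T : ℕ) (hT : 1 ≤ T) (τα τβ : ℕ → ℕ) :
    (∀ k < T, eventIndex τα k = eventIndex τβ k) ↔
    (∀ i < T, τα i = τβ i ∨ (T - i ≤ τα i ∧ T - i ≤ τβ i)) := by
  constructor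
  · intro h i hi
    have key : ∀ d, i + d < T → (τα i ≤ d ↔ τβ i ≤ d) := by
      intro d hd
      have := (eventIndex_eq_iff τα τβ (i + d)).mp (h (i + d) hd) d (by omega)
      simpa using this
    by_cases ha : T - i ≤ τα i
    · by_cases hb : T - i ≤ τβ i
      · exact Or.inr ⟨ha, hb⟩
      · left
        have h1 := (key (τβ i) (by omega)).mpr le_rfl
        omega
    · left
      have h1 := (key (τα i) (by omega)).mp le_rfl
      have h2 := (key (τβ i) (by omega)).mpr le_rfl
      omega
  · intro h k hk
    rw [eventIndex_eq_iff]
    intro l hl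
    have hi : k - l < T := by omega
    rcases h (k - l) hi with he | ⟨ha, hb⟩
    · rw [he]
    · constructor <;> intro <;> omega
end
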